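/- arXiv:math/0204142 — 9 statements merged into one kernel-verified Lean document; each statement's English description precedes it below -/
import Mathlib

section
/- Let X be a topological space, (Y,𝓤) a quasi-uniform space whose topology is compatible with 𝓤, 𝓑 a cover of Y, and F : X → 2^Y a multifunction. If F is 𝓑-lsc at a point x₀ ∈ X, then F is V-lsc at x₀. -/
/-! Each point `y ∈ F x₀` lies in some member `B` of the cover, so `𝓑`-lower semicontinuity
gives `y ∈ W⁻¹(F x)` for all `x` near `x₀`, i.e. `F x` meets the `W`-neighbourhood `W(y)`.
Compatibility of `𝓤` with the topology lets `W(y)` be chosen inside any open `G ∋ y`. -/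

open Filter Topology Set

/-- `W⁻¹(A) = {y | ∃ z ∈ A, (y, z) ∈ W}`. -/
def relPreimage {Y : Type*} (W : Set (Y × Y)) (A : Set Y) : Set Y :=
  {y | ∃ z ∈ A, (y, z) ∈ W}

section

variable {X Y : Type*} [TopologicalSpace X]

theorem eventually_mem_relPreimage_of_sUnion_eq_univ (𝓤 : Filter (Y × Y)) {𝓑 : Set (Set Y)}
    (hBcover : ⋃₀ 𝓑 = univ) {F : X → Set Y} {x₀ : X}
    (hB : ∀ W ∈ 𝓤, ∀ B ∈ 𝓑, ∃ U ∈ 𝓝 x₀, ∀ x ∈ U, F x₀ ∩ B ⊆ relPreimage W (F x))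
    {W : Set (Y × Y)} (hW : W ∈ 𝓤) {y : Y} (hy : y ∈ F x₀) :
    ∀ᶠ x in 𝓝 x₀, y ∈ relPreimage W (F x) := by
  obtain ⟨B, hB𝓑, hyB⟩ := mem_sUnion.1 (hBcover ▸ mem_univ y)
  obtain ⟨U, hU, hUW⟩ := hB W hW B hB𝓑
  exact eventually_of_mem hU fun x hx => hUW x hx ⟨hy, hyB⟩

theorem eventually_inter_nonempty_of_eventually_mem_relPreimage [TopologicalSpace Y]
    {𝓤 : Filter (Y × Y)}
    (hcompat : ∀ y : Y, (𝓝 y).HasBasis (· ∈ 𝓤) (fun W => {z | (y, z) ∈ W}))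
    {F : X → Set Y} {x₀ : X}
    (hF : ∀ W ∈ 𝓤, ∀ y ∈ F x₀, ∀ᶠ x in 𝓝 x₀, y ∈ relPreimage W (F x))
    {G : Set Y} (hG : IsOpen G) (hFG : (F x₀ ∩ G).Nonempty) :
    ∀ᶠ x in 𝓝 x₀, (F x ∩ G).Nonempty := by
  obtain ⟨y, hyF, hyG⟩ := hFG
  obtain ⟨W, hW, hWG⟩ := (hcompat y).mem_iff.1 (hG.mem_nhds hyG)
  filter_upwards [hF W hW y hyF] with x ⟨z, hzF, hyz⟩
  exact ⟨z, hzF, hWG hyz⟩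

end

theorem stmt_1_general {X Y : Type*} [TopologicalSpace X] [TopologicalSpace Y]
    (𝓤 : Filter (Y × Y))
    (hcompat : ∀ y : Y, (𝓝 y).HasBasis (· ∈ 𝓤) (fun W => {z | (y, z) ∈ W}))
    (𝓑 : Set (Set Y)) (hBcover : ⋃₀ 𝓑 = univ)
    (F : X → Set Y) (x₀ : X)
    (hB : ∀ W ∈ 𝓤, ∀ B ∈ 𝓑, ∃ U ∈ 𝓝 x₀, ∀ x ∈ U, F x₀ ∩ B ⊆ relPreimage W (F x)) :
    ∀ G : Set Y, IsOpen G → (F x₀ ∩ G).Nonempty →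
      ∃ U ∈ 𝓝 x₀, ∀ x ∈ U, (F x ∩ G).Nonempty := fun _ hG hFG =>
  (eventually_inter_nonempty_of_eventually_mem_relPreimage hcompat
    (fun _ hW _ hy => eventually_mem_relPreimage_of_sUnion_eq_univ 𝓤 hBcover hB hW hy)
    hG hFG).exists_mem

/-- If `F` is `𝓑`-lsc at `x₀` (for a cover `𝓑` of `Y`, w.r.t. a quasi-uniformity `𝓤`
compatible with the topology of `Y`), then `F` is V-lsc at `x₀`. -/
theorem stmt_1 {X Y : Type*} [TopologicalSpace X] [TopologicalSpace Y]
    (𝓤 : Filter (Y × Y))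
    (hdiag : ∀ W ∈ 𝓤, ∀ y : Y, (y, y) ∈ W)
    (hcomp : ∀ W ∈ 𝓤, ∃ V ∈ 𝓤, SetRel.comp V V ⊆ W)
    (hcompat : ∀ y : Y, (𝓝 y).HasBasis (· ∈ 𝓤) (fun W => {z | (y, z) ∈ W}))
    (𝓑 : Set (Set Y)) (hBne : ∀ B ∈ 𝓑, B.Nonempty) (hBcover : ⋃₀ 𝓑 = univ)
    (F : X → Set Y) (x₀ : X)
    (hB : ∀ W ∈ 𝓤, ∀ B ∈ 𝓑, ∃ U ∈ 𝓝 x₀, ∀ x ∈ U, F x₀ ∩ B ⊆ relPreimage W (F x)) :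
    ∀ G : Set Y, IsOpen G → (F x₀ ∩ G).Nonempty →
      ∃ U ∈ 𝓝 x₀, ∀ x ∈ U, (F x ∩ G).Nonempty :=
  stmt_1_general 𝓤 hcompat 𝓑 hBcover F x₀ hB
end

section
/- Let X be a topological space, (Y,𝓤) a quasi-uniform space whose topology is compatible with 𝓤, and let 𝓑 be the family of all singletons of Y. Then a multifunction F : X → 2^Y is V-lsc at x₀ ∈ X if and only if it is 𝓑-lsc at x₀. -/
open Filter Topology Set

theorem mem_relPreimage_iff {Y : Type*} {W : Set (Y × Y)} {A : Set Y} {y : Y} :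
    y ∈ relPreimage W A ↔ (A ∩ {z | (y, z) ∈ W}).Nonempty := by
  simp only [relPreimage, mem_ofPred_eq, Set.Nonempty, mem_inter_iff]

theorem forall_eventually_inter_singleton_subset_iff {X Y : Type*} {l : Filter X} {A : Set Y}
    {Q : X → Set Y} :
    (∀ y, ∀ᶠ x in l, A ∩ {y} ⊆ Q x) ↔ ∀ y ∈ A, ∀ᶠ x in l, y ∈ Q x := by
  refine forall_congr' fun y => ?_
  have hsubset (S : Set Y) : A ∩ {y} ⊆ S ↔ (y ∈ A → y ∈ S) := by
    by_cases hy : y ∈ A <;> simp [hy]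
  simp only [hsubset, eventually_imp_distrib_left]

section LowerSemicontinuity

variable {X Y : Type*} [TopologicalSpace X] [TopologicalSpace Y] (F : X → Set Y) (x₀ : X)

theorem forall_isOpen_inter_nonempty_iff_forall_mem_nhds :
    (∀ G : Set Y, IsOpen G → (F x₀ ∩ G).Nonempty →
        ∃ U ∈ 𝓝 x₀, ∀ x ∈ U, (F x ∩ G).Nonempty) ↔
      ∀ y ∈ F x₀, ∀ N ∈ 𝓝 y, ∀ᶠ x in 𝓝 x₀, (F x ∩ N).Nonempty := by
  simp only [← eventually_iff_exists_mem]
  constructor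
  · intro hF y hy N hN
    have hyN : y ∈ interior N := mem_interior_iff_mem_nhds.2 hN
    filter_upwards [hF _ isOpen_interior ⟨y, hy, hyN⟩] with x hx
    exact hx.mono (inter_subset_inter_right _ interior_subset)
  · rintro hF G hG ⟨y, hy, hyG⟩
    exact hF y hy G (hG.mem_nhds hyG)

theorem forall_mem_nhds_inter_nonempty_iff_of_hasBasis {ι : Type*} {p : ι → Prop}
    {s : Y → ι → Set Y} (hs : ∀ y, (𝓝 y).HasBasis p (s y)) :
    (∀ y ∈ F x₀, ∀ N ∈ 𝓝 y, ∀ᶠ x in 𝓝 x₀, (F x ∩ N).Nonempty) ↔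
      ∀ y ∈ F x₀, ∀ i, p i → ∀ᶠ x in 𝓝 x₀, (F x ∩ s y i).Nonempty :=
  forall₂_congr fun y _ => (hs y).forall_iff fun _ _ hst hN =>
    hN.mono fun _ hx => hx.mono (inter_subset_inter_right _ hst)

end LowerSemicontinuity

theorem stmt_2_general {X Y : Type*} [TopologicalSpace X] [TopologicalSpace Y]
    (𝓤 : Filter (Y × Y))
    (hcompat : ∀ y : Y, (𝓝 y).HasBasis (· ∈ 𝓤) (fun W => {z | (y, z) ∈ W}))
    (𝓑 : Set (Set Y)) (h𝓑 : 𝓑 = {B : Set Y | ∃ y : Y, B = {y}})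
    (F : X → Set Y) (x₀ : X) :
    (∀ G : Set Y, IsOpen G → (F x₀ ∩ G).Nonempty →
        ∃ U ∈ 𝓝 x₀, ∀ x ∈ U, (F x ∩ G).Nonempty) ↔
      (∀ W ∈ 𝓤, ∀ B ∈ 𝓑, ∃ U ∈ 𝓝 x₀, ∀ x ∈ U, F x₀ ∩ B ⊆ relPreimage W (F x)) := by
  subst h𝓑
  rw [forall_isOpen_inter_nonempty_iff_forall_mem_nhds,
    forall_mem_nhds_inter_nonempty_iff_of_hasBasis F x₀ hcompat]
  simp only [mem_ofPred_eq, forall_exists_index, forall_eq_apply_imp_iff,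
    ← eventually_iff_exists_mem, forall_eventually_inter_singleton_subset_iff,
    mem_relPreimage_iff]
  exact ⟨fun h W hW y hy => h y hy W hW, fun h y hy W hW => h W hW y hy⟩

/-- For `𝓑` the family of all singletons of `Y`, a multifunction `F` is V-lsc at `x₀`
if and only if it is `𝓑`-lsc at `x₀`. -/
theorem stmt_2 {X Y : Type*} [TopologicalSpace X] [TopologicalSpace Y]
    (𝓤 : Filter (Y × Y))
    (hdiag : ∀ W ∈ 𝓤, ∀ y : Y, (y, y) ∈ W)
    (hcomp : ∀ W ∈ 𝓤, ∃ V ∈ 𝓤, SetRel.comp V V ⊆ W)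
    (hcompat : ∀ y : Y, (𝓝 y).HasBasis (· ∈ 𝓤) (fun W => {z | (y, z) ∈ W}))
    (𝓑 : Set (Set Y)) (h𝓑 : 𝓑 = {B : Set Y | ∃ y : Y, B = {y}})
    (F : X → Set Y) (x₀ : X) :
    (∀ G : Set Y, IsOpen G → (F x₀ ∩ G).Nonempty →
        ∃ U ∈ 𝓝 x₀, ∀ x ∈ U, (F x ∩ G).Nonempty) ↔
      (∀ W ∈ 𝓤, ∀ B ∈ 𝓑, ∃ U ∈ 𝓝 x₀, ∀ x ∈ U, F x₀ ∩ B ⊆ relPreimage W (F x)) :=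
  stmt_2_general 𝓤 hcompat 𝓑 h𝓑 F x₀
end

section
/- Let X be a topological space, (Y,𝓤) a quasi-uniform space whose topology is compatible with 𝓤, 𝓑 a cover of Y, F : X → 2^Y a multifunction and x₀ ∈ X. If F(x₀) is 𝓑-totally bounded, then F is V-lsc at x₀ if and only if F is 𝓑-lsc at x₀. -/
open Filter Topology Set

/-- A set `A` is totally bounded w.r.t. the quasi-uniformity `𝓤` if for every `W ∈ 𝓤`
there is a finite set `B ⊆ A` with `A ⊆ W⁻¹(B)`. -/
def TotallyBddRel {Y : Type*} (𝓤 : Filter (Y × Y)) (A : Set Y) : Prop :=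
  ∀ W ∈ 𝓤, ∃ B : Set Y, B.Finite ∧ B ⊆ A ∧ A ⊆ relPreimage W B

/-!
Via the compatibility of the topology with `𝓤`, V-lsc at `x₀` says exactly that each point of
`F x₀` is, for every entourage `W`, eventually `W`-close to `F x`. `𝓑`-lsc is the same closeness
required uniformly on each `F x₀ ∩ B`; it implies the pointwise version because `𝓑` covers `Y`,
and total boundedness of `F x₀ ∩ B` lets pointwise closeness at finitely many centres be upgraded
to uniform closeness.
-/

section RelPreimage

variable {Y : Type*}

theorem relPreimage_mono {W W' : Set (Y × Y)} {A A' : Set Y} (hW : W ⊆ W') (hA : A ⊆ A') :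
    relPreimage W A ⊆ relPreimage W' A' :=
  fun _ ⟨z, hz, hyz⟩ => ⟨z, hA hz, hW hyz⟩

theorem relPreimage_relPreimage_subset (V V' : Set (Y × Y)) (A : Set Y) :
    relPreimage V (relPreimage V' A) ⊆ relPreimage (SetRel.comp V V') A :=
  fun _ ⟨_, ⟨w, hw, hzw⟩, hyz⟩ => ⟨w, hw, _, hyz, hzw⟩

theorem mem_relPreimage_iff_inter_nonempty {W : Set (Y × Y)} {A : Set Y} {y : Y} :
    y ∈ relPreimage W A ↔ (A ∩ {z | (y, z) ∈ W}).Nonempty :=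
  ⟨fun ⟨z, hz, hyz⟩ => ⟨z, hz, hyz⟩, fun ⟨z, hz, hyz⟩ => ⟨z, hz, hyz⟩⟩

end RelPreimage

section LowerSemicontinuity

variable {X Y : Type*} [TopologicalSpace X]

theorem eventually_subset_relPreimage_of_totallyBddRel {𝓤 : Filter (Y × Y)}
    (hcomp : ∀ W ∈ 𝓤, ∃ V ∈ 𝓤, SetRel.comp V V ⊆ W)
    {F : X → Set Y} {x₀ : X} {A : Set Y} (hA : TotallyBddRel 𝓤 A)
    (hclose : ∀ y ∈ A, ∀ W ∈ 𝓤, ∀ᶠ x in 𝓝 x₀, y ∈ relPreimage W (F x))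
    {W : Set (Y × Y)} (hW : W ∈ 𝓤) :
    ∀ᶠ x in 𝓝 x₀, A ⊆ relPreimage W (F x) := by
  obtain ⟨V, hV, hVW⟩ := hcomp W hW
  obtain ⟨C, hCfin, hCA, hAC⟩ := hA V hV
  have hcentres : ∀ᶠ x in 𝓝 x₀, C ⊆ relPreimage V (F x) :=
    (eventually_all_finite hCfin).2 fun c hc => hclose c (hCA hc) V hV
  filter_upwards [hcentres] with x hx
  calc A ⊆ relPreimage V C := hAC
    _ ⊆ relPreimage V (relPreimage V (F x)) := relPreimage_mono subset_rfl hx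
    _ ⊆ relPreimage (SetRel.comp V V) (F x) := relPreimage_relPreimage_subset V V (F x)
    _ ⊆ relPreimage W (F x) := relPreimage_mono hVW subset_rfl

variable [TopologicalSpace Y]

def VLowerSemicontinuousAt (F : X → Set Y) (x₀ : X) : Prop :=
  ∀ G : Set Y, IsOpen G → (F x₀ ∩ G).Nonempty → ∃ U ∈ 𝓝 x₀, ∀ x ∈ U, (F x ∩ G).Nonempty

theorem vLowerSemicontinuousAt_iff_forall_mem_nhds {F : X → Set Y} {x₀ : X} :
    VLowerSemicontinuousAt F x₀ ↔
      ∀ y ∈ F x₀, ∀ s ∈ 𝓝 y, ∀ᶠ x in 𝓝 x₀, (F x ∩ s).Nonempty := by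
  constructor
  · intro hF y hy s hs
    obtain ⟨U, hU, hUs⟩ := hF (interior s) isOpen_interior ⟨y, hy, mem_interior_iff_mem_nhds.2 hs⟩
    filter_upwards [hU] with x hx
    exact (hUs x hx).mono (inter_subset_inter_right _ interior_subset)
  · rintro hF G hG ⟨y, hy, hyG⟩
    exact eventually_iff_exists_mem.1 (hF y hy G (hG.mem_nhds hyG))

theorem vLowerSemicontinuousAt_iff_forall_eventually_mem_relPreimage {𝓤 : Filter (Y × Y)}
    (hcompat : ∀ y : Y, (𝓝 y).HasBasis (· ∈ 𝓤) (fun W => {z | (y, z) ∈ W}))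
    {F : X → Set Y} {x₀ : X} :
    VLowerSemicontinuousAt F x₀ ↔
      ∀ y ∈ F x₀, ∀ W ∈ 𝓤, ∀ᶠ x in 𝓝 x₀, y ∈ relPreimage W (F x) := by
  simp only [vLowerSemicontinuousAt_iff_forall_mem_nhds, mem_relPreimage_iff_inter_nonempty]
  refine forall₂_congr fun y _ => (hcompat y).forall_iff fun s t hst hs => ?_
  filter_upwards [hs] with x hx
  exact hx.mono (inter_subset_inter_right _ hst)

end LowerSemicontinuity

theorem stmt_3_general {X Y : Type*} [TopologicalSpace X] [TopologicalSpace Y]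
    (𝓤 : Filter (Y × Y))
    (hcomp : ∀ W ∈ 𝓤, ∃ V ∈ 𝓤, SetRel.comp V V ⊆ W)
    (hcompat : ∀ y : Y, (𝓝 y).HasBasis (· ∈ 𝓤) (fun W => {z | (y, z) ∈ W}))
    (𝓑 : Set (Set Y)) (hBcover : ⋃₀ 𝓑 = univ)
    (F : X → Set Y) (x₀ : X)
    (htb : ∀ B ∈ 𝓑, TotallyBddRel 𝓤 (F x₀ ∩ B)) :
    (∀ G : Set Y, IsOpen G → (F x₀ ∩ G).Nonempty →
        ∃ U ∈ 𝓝 x₀, ∀ x ∈ U, (F x ∩ G).Nonempty) ↔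
      (∀ W ∈ 𝓤, ∀ B ∈ 𝓑, ∃ U ∈ 𝓝 x₀, ∀ x ∈ U, F x₀ ∩ B ⊆ relPreimage W (F x)) := by
  refine (vLowerSemicontinuousAt_iff_forall_eventually_mem_relPreimage hcompat).trans
    ⟨fun hclose W hW B hB => ?_, fun hBlsc y hy W hW => ?_⟩
  · exact eventually_iff_exists_mem.1 <| eventually_subset_relPreimage_of_totallyBddRel hcomp
      (htb B hB) (fun y hy => hclose y hy.1) hW
  · obtain ⟨B, hB, hyB⟩ := sUnion_eq_univ_iff.1 hBcover y
    obtain ⟨U, hU, hUB⟩ := hBlsc W hW B hB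
    exact mem_of_superset hU fun x hx => hUB x hx ⟨hy, hyB⟩

/-- If `F x₀` is `𝓑`-totally bounded, then `F` is V-lsc at `x₀` iff it is `𝓑`-lsc at `x₀`. -/
theorem stmt_3 {X Y : Type*} [TopologicalSpace X] [TopologicalSpace Y]
    (𝓤 : Filter (Y × Y))
    (hdiag : ∀ W ∈ 𝓤, ∀ y : Y, (y, y) ∈ W)
    (hcomp : ∀ W ∈ 𝓤, ∃ V ∈ 𝓤, SetRel.comp V V ⊆ W)
    (hcompat : ∀ y : Y, (𝓝 y).HasBasis (· ∈ 𝓤) (fun W => {z | (y, z) ∈ W}))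
    (𝓑 : Set (Set Y)) (hBne : ∀ B ∈ 𝓑, B.Nonempty) (hBcover : ⋃₀ 𝓑 = univ)
    (F : X → Set Y) (x₀ : X)
    (htb : ∀ B ∈ 𝓑, TotallyBddRel 𝓤 (F x₀ ∩ B)) :
    (∀ G : Set Y, IsOpen G → (F x₀ ∩ G).Nonempty →
        ∃ U ∈ 𝓝 x₀, ∀ x ∈ U, (F x ∩ G).Nonempty) ↔
      (∀ W ∈ 𝓤, ∀ B ∈ 𝓑, ∃ U ∈ 𝓝 x₀, ∀ x ∈ U, F x₀ ∩ B ⊆ relPreimage W (F x)) :=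
  stmt_3_general 𝓤 hcomp hcompat 𝓑 hBcover F x₀ htb
end

section
/- Let X be a topological space, (Y,𝓤) a quasi-uniform space whose topology is compatible with 𝓤, F : X → 2^Y a multifunction and x₀ ∈ X. Then F is H-lsc at x₀ if and only if the closure multifunction cl(F), defined by cl(F)(x) = cl(F(x)) (closure in the topology of Y), is H-lsc at x₀. -/
/-! Since every `V(y)` is a neighbourhood of `y`, `cl A ⊆ V⁻¹(A)`: passing to closures costs one
extra factor `V`, which is absorbed by choosing `V ∘ V ⊆ W`. -/

open Filter Topology Set

theorem relPreimage_eq_preimage {Y : Type*} (W : Set (Y × Y)) (A : Set Y) :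
    relPreimage W A = SetRel.preimage W A := rfl

section

variable {Y : Type*} [TopologicalSpace Y] {V W : Set (Y × Y)} {A B : Set Y}

theorem closure_subset_relPreimage (hV : ∀ y, {z | (y, z) ∈ V} ∈ 𝓝 y) (A : Set Y) :
    closure A ⊆ relPreimage V A := by
  intro y hy
  obtain ⟨z, hzV, hzA⟩ := mem_closure_iff_nhds.mp hy _ (hV y)
  exact ⟨z, hzA, hzV⟩

theorem closure_subset_relPreimage_closure (hV : ∀ y, {z | (y, z) ∈ V} ∈ 𝓝 y)
    (hVW : SetRel.comp V V ⊆ W) (h : A ⊆ relPreimage V B) :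
    closure A ⊆ relPreimage W (closure B) := by
  simp only [relPreimage_eq_preimage] at *
  calc closure A ⊆ SetRel.preimage V A := closure_subset_relPreimage hV A
    _ ⊆ SetRel.preimage V (SetRel.preimage V B) := SetRel.preimage_subset_preimage h
    _ = SetRel.preimage (SetRel.comp V V) B := (SetRel.preimage_comp ..).symm
    _ ⊆ SetRel.preimage W (closure B) :=
      (SetRel.preimage_subset_preimage_left hVW).trans
        (SetRel.preimage_subset_preimage subset_closure)

theorem subset_relPreimage_of_closure_subset (hV : ∀ y, {z | (y, z) ∈ V} ∈ 𝓝 y)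
    (hVW : SetRel.comp V V ⊆ W) (h : closure A ⊆ relPreimage V (closure B)) :
    A ⊆ relPreimage W B := by
  simp only [relPreimage_eq_preimage] at *
  calc A ⊆ closure A := subset_closure
    _ ⊆ SetRel.preimage V (closure B) := h
    _ ⊆ SetRel.preimage V (SetRel.preimage V B) :=
      SetRel.preimage_subset_preimage (closure_subset_relPreimage hV B)
    _ = SetRel.preimage (SetRel.comp V V) B := (SetRel.preimage_comp ..).symm
    _ ⊆ SetRel.preimage W B := SetRel.preimage_subset_preimage_left hVW

end

theorem stmt_5_general {X Y : Type*} [TopologicalSpace X] [TopologicalSpace Y]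
    (𝓤 : Filter (Y × Y))
    (hcomp : ∀ W ∈ 𝓤, ∃ V ∈ 𝓤, SetRel.comp V V ⊆ W)
    (hcompat : ∀ y : Y, (𝓝 y).HasBasis (· ∈ 𝓤) (fun W => {z | (y, z) ∈ W}))
    (F : X → Set Y) (x₀ : X) :
    (∀ W ∈ 𝓤, ∃ U ∈ 𝓝 x₀, ∀ x ∈ U, F x₀ ⊆ relPreimage W (F x)) ↔
      (∀ W ∈ 𝓤, ∃ U ∈ 𝓝 x₀, ∀ x ∈ U, closure (F x₀) ⊆ relPreimage W (closure (F x))) := by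
  have hnhds : ∀ V ∈ 𝓤, ∀ y, {z | (y, z) ∈ V} ∈ 𝓝 y := fun V hV y => (hcompat y).mem_of_mem hV
  constructor
  all_goals
    intro h W hW
    obtain ⟨V, hV, hVW⟩ := hcomp W hW
    obtain ⟨U, hU, hUF⟩ := h V hV
    refine ⟨U, hU, fun x hx => ?_⟩
  · exact closure_subset_relPreimage_closure (hnhds V hV) hVW (hUF x hx)
  · exact subset_relPreimage_of_closure_subset (hnhds V hV) hVW (hUF x hx)

/-- `F` is H-lsc at `x₀` iff the closure multifunction `cl(F)` is H-lsc at `x₀`. -/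
theorem stmt_5 {X Y : Type*} [TopologicalSpace X] [TopologicalSpace Y]
    (𝓤 : Filter (Y × Y))
    (hdiag : ∀ W ∈ 𝓤, ∀ y : Y, (y, y) ∈ W)
    (hcomp : ∀ W ∈ 𝓤, ∃ V ∈ 𝓤, SetRel.comp V V ⊆ W)
    (hcompat : ∀ y : Y, (𝓝 y).HasBasis (· ∈ 𝓤) (fun W => {z | (y, z) ∈ W}))
    (F : X → Set Y) (x₀ : X) :
    (∀ W ∈ 𝓤, ∃ U ∈ 𝓝 x₀, ∀ x ∈ U, F x₀ ⊆ relPreimage W (F x)) ↔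
      (∀ W ∈ 𝓤, ∃ U ∈ 𝓝 x₀, ∀ x ∈ U, closure (F x₀) ⊆ relPreimage W (closure (F x))) :=
  stmt_5_general 𝓤 hcomp hcompat F x₀
end

section
/- Let X be a topological space, I an index type, and for each i ∈ I let (Y_i,𝓤_i) be a quasi-uniform space, 𝓑_i a cover of Y_i, and F_i : X → 2^{Y_i} a multifunction with F_i(x) nonempty for every x ∈ X. If the product multifunction Π_{i∈I} F_i, defined by (Π F_i)(x) = {y : ∀ i, y(i) ∈ F_i(x)}, is Π_{i∈I}𝓑_i-lsc at x₀ ∈ X with respect to the product quasi-uniformity on Π_{i∈I} Y_i, then for every i ∈ I the multifunction F_i is 𝓑_i-lsc at x₀. -/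
open Filter Topology Set

/-- The product quasi-uniformity on `Π i, Y i`. -/
def prodQU {I : Type*} {Y : I → Type*} (𝓤 : ∀ i, Filter (Y i × Y i)) :
    Filter ((∀ i, Y i) × (∀ i, Y i)) :=
  ⨅ i, Filter.comap (fun p => (p.1 i, p.2 i)) (𝓤 i)

/-- The product cover `Π_{i∈I} 𝓑_i`: products `Π B_i` with `B_i ∈ 𝓑_i ∪ {Y_i}` and
`B_i = Y_i` for all but finitely many `i`. -/
def prodCover {I : Type*} {Y : I → Type*} (𝓑 : ∀ i, Set (Set (Y i))) :
    Set (Set (∀ i, Y i)) :=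
  {S | ∃ B : ∀ i, Set (Y i), (∀ i, B i ∈ 𝓑 i ∨ B i = univ) ∧
    {i | B i ≠ univ}.Finite ∧ S = Set.pi univ B}

/-! Since every `F j x₀` is nonempty, each `y ∈ F i x₀ ∩ B` is the `i`-th coordinate of a point of
`Π F j x₀` lying in the cylinder `eval i ⁻¹' B`, which belongs to the product cover. Lower
semicontinuity of the product for the entourage `{(z₁, z₂) | (z₁ i, z₂ i) ∈ W}` yields a point `w` of
`Π F j x` with `(y, w i) ∈ W`, and `w i ∈ F i x`. -/

section Product

variable {I : Type*} {Y : I → Type*}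

theorem preimage_eval_mem_prodQU (𝓤 : ∀ i, Filter (Y i × Y i)) {i : I} {W : Set (Y i × Y i)}
    (hW : W ∈ 𝓤 i) : (fun p : (∀ j, Y j) × (∀ j, Y j) => (p.1 i, p.2 i)) ⁻¹' W ∈ prodQU 𝓤 :=
  mem_iInf_of_mem i (preimage_mem_comap hW)

theorem preimage_eval_mem_prodCover (𝓑 : ∀ i, Set (Set (Y i))) {i : I} {B : Set (Y i)}
    (hB : B ∈ 𝓑 i) : Function.eval i ⁻¹' B ∈ prodCover 𝓑 := by
  classical
  refine ⟨Function.update (fun _ => univ) i B, fun j => ?_,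
    (finite_singleton i).subset fun j hj => ?_, (univ_pi_update_univ i B).symm⟩
  · obtain rfl | hji := eq_or_ne j i
    · simp [hB]
    · simp [hji]
  · by_contra hji
    exact hj (Function.update_of_ne hji _ _)

theorem subset_image_eval_setOf_forall_mem {A : ∀ j, Set (Y j)} (hA : ∀ j, (A j).Nonempty)
    (i : I) : A i ⊆ Function.eval i '' {y | ∀ j, y j ∈ A j} := by
  simpa [Set.pi] using subset_eval_image_pi (univ_pi_nonempty_iff.2 hA) i

theorem image_eval_relPreimage_subset (i : I) (W : Set (Y i × Y i)) (A : ∀ j, Set (Y j)) :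
    Function.eval i '' relPreimage ((fun p : (∀ j, Y j) × (∀ j, Y j) => (p.1 i, p.2 i)) ⁻¹' W)
      {y | ∀ j, y j ∈ A j} ⊆ relPreimage W (A i) := by
  rintro _ ⟨y, ⟨z, hz, hyz⟩, rfl⟩
  exact ⟨z i, hz i, hyz⟩

end Product

theorem stmt_10_general {X : Type*} [TopologicalSpace X] {I : Type*} {Y : I → Type*}
    (𝓤 : ∀ i, Filter (Y i × Y i))
    (𝓑 : ∀ i, Set (Set (Y i)))
    (F : ∀ i, X → Set (Y i)) (x₀ : X)
    (hFne : ∀ i, ∀ x : X, (F i x).Nonempty)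
    (hlsc : ∀ W ∈ prodQU 𝓤, ∀ S ∈ prodCover 𝓑, ∃ U ∈ 𝓝 x₀, ∀ x ∈ U,
      {y : ∀ i, Y i | ∀ i, y i ∈ F i x₀} ∩ S ⊆
        relPreimage W {y : ∀ i, Y i | ∀ i, y i ∈ F i x}) :
    ∀ i, ∀ W ∈ 𝓤 i, ∀ B ∈ 𝓑 i,
      ∃ U ∈ 𝓝 x₀, ∀ x ∈ U, F i x₀ ∩ B ⊆ relPreimage W (F i x) := by
  intro i W hW B hB
  obtain ⟨U, hU, hUlsc⟩ :=
    hlsc _ (preimage_eval_mem_prodQU 𝓤 hW) _ (preimage_eval_mem_prodCover 𝓑 hB)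
  refine ⟨U, hU, fun x hx => ?_⟩
  calc F i x₀ ∩ B
      ⊆ Function.eval i '' {y | ∀ j, y j ∈ F j x₀} ∩ B :=
        inter_subset_inter_left B (subset_image_eval_setOf_forall_mem (hFne · x₀) i)
    _ = Function.eval i '' ({y | ∀ j, y j ∈ F j x₀} ∩ Function.eval i ⁻¹' B) :=
        (image_inter_preimage _ _ _).symm
    _ ⊆ Function.eval i '' relPreimage _ {y | ∀ j, y j ∈ F j x} := image_mono (hUlsc x hx)
    _ ⊆ relPreimage W (F i x) := image_eval_relPreimage_subset i W (F · x)

/-- If the product multifunction of nonempty-valued `F i` is `Π 𝓑 i`-lsc at `x₀`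
(w.r.t. the product quasi-uniformity), then every `F i` is `𝓑 i`-lsc at `x₀`. -/
theorem stmt_10 {X : Type*} [TopologicalSpace X] {I : Type*} {Y : I → Type*}
    (𝓤 : ∀ i, Filter (Y i × Y i))
    (hdiag : ∀ i, ∀ W ∈ 𝓤 i, ∀ y : Y i, (y, y) ∈ W)
    (hcomp : ∀ i, ∀ W ∈ 𝓤 i, ∃ V ∈ 𝓤 i, SetRel.comp V V ⊆ W)
    (𝓑 : ∀ i, Set (Set (Y i)))
    (hBne : ∀ i, ∀ B ∈ 𝓑 i, B.Nonempty) (hBcover : ∀ i, ⋃₀ 𝓑 i = univ)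
    (F : ∀ i, X → Set (Y i)) (x₀ : X)
    (hFne : ∀ i, ∀ x : X, (F i x).Nonempty)
    (hlsc : ∀ W ∈ prodQU 𝓤, ∀ S ∈ prodCover 𝓑, ∃ U ∈ 𝓝 x₀, ∀ x ∈ U,
      {y : ∀ i, Y i | ∀ i, y i ∈ F i x₀} ∩ S ⊆
        relPreimage W {y : ∀ i, Y i | ∀ i, y i ∈ F i x}) :
    ∀ i, ∀ W ∈ 𝓤 i, ∀ B ∈ 𝓑 i,
      ∃ U ∈ 𝓝 x₀, ∀ x ∈ U, F i x₀ ∩ B ⊆ relPreimage W (F i x) :=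
  stmt_10_general 𝓤 𝓑 F x₀ hFne hlsc
end

section
/- Let Y be a real normed vector space and A ⊆ Y a convex, bounded set with nonempty interior. Then for every ε > 0 there exist a nonempty set C ⊆ int(A) and δ > 0 such that C + B(δ) ⊆ A ⊆ C + B(ε), where B(r) = {y ∈ Y : ‖y‖ < r} and C + D = {c + d : c ∈ C, d ∈ D}. -/
/-!
Pick a ball `ball x r ⊆ A` and a radius `R` with `A ⊆ closedBall x R`, and take for `C` the image
of `A` under the homothety of centre `x` and ratio `1 - u`, i.e. `C = u • x + (1 - u) • A`.
By convexity `C + ball 0 (u * r) = (1 - u) • A + u • ball x r ⊆ A`, while every `a ∈ A` is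
`u • x + (1 - u) • a` up to `u • (a - x)`, of norm at most `u * R`, which is `< ε` for small `u`.
-/

open Set Pointwise Metric

section ShrunkenCopy

variable {E : Type*} [SeminormedAddCommGroup E] [NormedSpace ℝ E] {A : Set E} {x : E} {u : ℝ}

theorem Convex.singleton_add_smul_subset_interior (hA : Convex ℝ A) (hx : x ∈ interior A)
    (hu₀ : 0 < u) (hu₁ : u ≤ 1) : {u • x} + (1 - u) • A ⊆ interior A :=
  calc {u • x} + (1 - u) • A ⊆ u • interior A + (1 - u) • A :=
        add_subset_add_right (singleton_subset_iff.2 (smul_mem_smul_set hx))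
    _ ⊆ interior A := hA.combo_interior_self_subset_interior hu₀ (by linarith) (by ring)

theorem Convex.singleton_add_smul_add_ball_subset (hA : Convex ℝ A) {r : ℝ}
    (hball : ball x r ⊆ A) (hu₀ : 0 < u) (hu₁ : u ≤ 1) :
    {u • x} + (1 - u) • A + ball 0 (u * r) ⊆ A :=
  calc {u • x} + (1 - u) • A + ball 0 (u * r) = (1 - u) • A + ({u • x} + ball 0 (u * r)) := by
        rw [add_comm {u • x}, add_assoc]
    _ = (1 - u) • A + u • ball x r := by
        rw [singleton_add_ball, add_zero, _root_.smul_ball hu₀.ne', Real.norm_of_nonneg hu₀.le]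
    _ ⊆ (1 - u) • A + u • A := add_subset_add_left (smul_set_mono hball)
    _ ⊆ A := hA.set_combo_subset (by linarith) hu₀.le (by ring)

theorem subset_singleton_add_smul_add_ball {R ε : ℝ} (hR : A ⊆ closedBall x R) (hu₀ : 0 ≤ u)
    (huR : u * R < ε) : A ⊆ {u • x} + (1 - u) • A + ball 0 ε := by
  intro a ha
  have hdist : u * ‖a - x‖ < ε :=
    (mul_le_mul_of_nonneg_left (mem_closedBall_iff_norm.1 (hR ha)) hu₀).trans_lt huR
  rw [show a = u • x + (1 - u) • a + u • (a - x) by module]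
  refine add_mem_add (add_mem_add (mem_singleton _) (smul_mem_smul_set ha)) ?_
  rwa [mem_ball_zero_iff, norm_smul, Real.norm_of_nonneg hu₀]

end ShrunkenCopy

/-- If `A` is a convex bounded subset with nonempty interior of a real normed space,
then for every `ε > 0` there are a nonempty `C ⊆ int A` and `δ > 0` with
`C + B(δ) ⊆ A ⊆ C + B(ε)`. -/
theorem stmt_11 {Y : Type*} [NormedAddCommGroup Y] [NormedSpace ℝ Y]
    (A : Set Y) (hconv : Convex ℝ A) (hbdd : Bornology.IsBounded A)
    (hint : (interior A).Nonempty) :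
    ∀ ε > (0 : ℝ), ∃ C : Set Y, C.Nonempty ∧ C ⊆ interior A ∧ ∃ δ > (0 : ℝ),
      C + ball (0 : Y) δ ⊆ A ∧ A ⊆ C + ball (0 : Y) ε := by
  intro ε hε
  obtain ⟨x, hx⟩ := hint
  obtain ⟨r, hr, hball⟩ := Metric.isOpen_iff.1 isOpen_interior x hx
  obtain ⟨R, hR₀, hR⟩ := hbdd.subset_closedBall_lt 0 x
  obtain ⟨c, hc, hcR⟩ := exists_pos_mul_lt hε R
  set u := min c 1
  have hu₀ : 0 < u := lt_min hc one_pos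
  have hu₁ : u ≤ 1 := min_le_right c 1
  have huR : u * R < ε :=
    calc u * R ≤ c * R := mul_le_mul_of_nonneg_right (min_le_left c 1) hR₀.le
      _ < ε := by rwa [mul_comm]
  refine ⟨{u • x} + (1 - u) • A,
    (singleton_nonempty _).add (nonempty_of_mem (interior_subset hx)).smul_set,
    hconv.singleton_add_smul_subset_interior hx hu₀ hu₁, u * r, mul_pos hu₀ hr,
    hconv.singleton_add_smul_add_ball_subset (hball.trans interior_subset) hu₀ hu₁,
    subset_singleton_add_smul_add_ball hR hu₀.le huR⟩
end

section
/- (Law of cancellation.) Let Y be a real topological vector space and let A, B, C ⊆ Y. Assume that B is nonempty and bounded (in the topological vector space sense: absorbed by every neighbourhood of 0), and that C is nonempty, closed and convex. If A + B ⊆ cl(C + B), then A ⊆ C. In particular, A + B ⊆ C + B implies A ⊆ C, and cl(A + B) ⊆ cl(C + B) implies A ⊆ C. -/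
open Set Pointwise Topology Filter

/-!
Iterating `A + B ⊆ cl (C + B)` gives `n • A + B ⊆ cl (n • C + B)` for the `n`-fold Minkowski sums,
and convexity of `C` turns the `n`-fold sum `C + ⋯ + C` into the dilate `n • C`. Dividing by `n`,
`a` lies in `C` up to an error `n⁻¹ • (B - B)`, which boundedness of `B` makes arbitrarily small.
-/

theorem closure_add_closure_subset {M : Type*} [Add M] [TopologicalSpace M]
    [SeparatelyContinuousAdd M] (s t : Set M) :
    closure s + closure t ⊆ closure (s + t) :=
  image2_subset_iff.2 fun _ hx _ hy =>
    map_mem_closure₂' (fun _ => continuous_const_add _) (fun _ => continuous_add_const _) hx hy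
      fun _ ha _ hb => add_mem_add ha hb

theorem nsmul_add_subset_closure_nsmul_add {M : Type*} [AddCommMonoid M] [TopologicalSpace M]
    [SeparatelyContinuousAdd M] {A B C : Set M} (h : A + B ⊆ closure (C + B)) (n : ℕ) :
    n • A + B ⊆ closure (n • C + B) := by
  induction n with
  | zero => simpa using subset_closure
  | succ n ih =>
    calc (n + 1) • A + B = A + (n • A + B) := by rw [succ_nsmul, add_comm _ A, add_assoc]
      _ ⊆ closure A + closure (n • C + B) := add_subset_add subset_closure ih
      _ ⊆ closure (n • C + (A + B)) := by
        rw [add_left_comm]; exact closure_add_closure_subset _ _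
      _ ⊆ closure (closure (n • C) + closure (C + B)) :=
        closure_mono (add_subset_add subset_closure h)
      _ ⊆ closure ((n + 1) • C + B) := by
        rw [succ_nsmul, add_assoc]
        exact closure_minimal (closure_add_closure_subset _ _) isClosed_closure

theorem Convex.nsmul_eq_natCast_smul {𝕜 E : Type*} [Field 𝕜] [LinearOrder 𝕜]
    [IsStrictOrderedRing 𝕜] [AddCommGroup E] [Module 𝕜 E] {C : Set E} (hC : Convex 𝕜 C)
    {n : ℕ} (hn : n ≠ 0) : n • C = (n : 𝕜) • C := by
  obtain ⟨m, rfl⟩ := Nat.exists_eq_add_one_of_ne_zero hn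
  induction m with
  | zero => simp
  | succ m ih =>
    rw [succ_nsmul, ih m.succ_ne_zero, Nat.cast_succ (m + 1),
      hC.add_smul (m + 1).cast_nonneg zero_le_one, one_smul]

theorem mem_closure_of_eventually_smul_add_mem_closure {Y : Type*} [AddCommGroup Y] [Module ℝ Y]
    [TopologicalSpace Y] [IsTopologicalAddGroup Y] [ContinuousSMul ℝ Y] {a b : Y} {B C : Set Y}
    (hB : Bornology.IsVonNBounded ℝ B) (hb : b ∈ B)
    (h : ∀ᶠ n : ℕ in atTop, (n : ℝ) • a + b ∈ closure ((n : ℝ) • C + B)) :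
    a ∈ closure C := by
  rw [mem_closure_iff_nhds_zero]
  intro U hU
  obtain ⟨V, hV, hVU⟩ := exists_nhds_zero_half hU
  have hBV : ∀ᶠ n : ℕ in atTop, B - B ⊆ (n : ℝ) • V :=
    tendsto_natCast_atTop_cobounded.eventually (hB.sub hB hV)
  obtain ⟨n, hn, hBn, hmem⟩ := ((eventually_ne_atTop 0).and (hBV.and h)).exists
  replace hn : (n : ℝ) ≠ 0 := Nat.cast_ne_zero.2 hn
  rw [mem_closure_iff_nhds_zero] at hmem
  obtain ⟨_, ⟨_, ⟨c, hc, rfl⟩, b', hb', rfl⟩, v, hv, hv_eq⟩ :=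
    hmem _ ((set_smul_mem_nhds_zero_iff hn).2 hV)
  obtain ⟨w, hw, hw_eq⟩ := hBn (sub_mem_sub hb hb')
  refine ⟨c, hc, ?_⟩
  have : (n : ℝ) • (c - a) = (n : ℝ) • (v + w) := by
    simp only [smul_add, smul_sub] at hv_eq hw_eq ⊢
    rw [hv_eq, hw_eq]
    abel
  rw [smul_right_injective Y hn this]
  exact hVU v hv w hw

theorem stmt_12_general {Y : Type*} [AddCommGroup Y] [Module ℝ Y] [TopologicalSpace Y]
    [IsTopologicalAddGroup Y] [ContinuousSMul ℝ Y]
    (A B C : Set Y)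
    (hBne : B.Nonempty) (hBbdd : Bornology.IsVonNBounded ℝ B)
    (hCcl : IsClosed C) (hCconv : Convex ℝ C) :
    (A + B ⊆ closure (C + B) → A ⊆ C) ∧
      (A + B ⊆ C + B → A ⊆ C) ∧
      (closure (A + B) ⊆ closure (C + B) → A ⊆ C) := by
  have cancel : A + B ⊆ closure (C + B) → A ⊆ C := by
    intro h a ha
    obtain ⟨b, hb⟩ := hBne
    rw [← hCcl.closure_eq]
    refine mem_closure_of_eventually_smul_add_mem_closure hBbdd hb ?_
    filter_upwards [eventually_ne_atTop 0] with n hn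
    rw [← hCconv.nsmul_eq_natCast_smul hn, Nat.cast_smul_eq_nsmul]
    exact nsmul_add_subset_closure_nsmul_add h n (add_mem_add (nsmul_mem_nsmul ha) hb)
  exact ⟨cancel, fun h => cancel (h.trans subset_closure),
    fun h => cancel (subset_closure.trans h)⟩

/-- Law of cancellation: in a real topological vector space, if `B` is nonempty and
von Neumann bounded, and `C` is nonempty, closed and convex, then
`A + B ⊆ cl (C + B)` implies `A ⊆ C`; in particular `A + B ⊆ C + B` implies `A ⊆ C`,
and `cl (A + B) ⊆ cl (C + B)` implies `A ⊆ C`. -/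
theorem stmt_12 {Y : Type*} [AddCommGroup Y] [Module ℝ Y] [TopologicalSpace Y]
    [IsTopologicalAddGroup Y] [ContinuousSMul ℝ Y]
    (A B C : Set Y)
    (hBne : B.Nonempty) (hBbdd : Bornology.IsVonNBounded ℝ B)
    (hCne : C.Nonempty) (hCcl : IsClosed C) (hCconv : Convex ℝ C) :
    (A + B ⊆ closure (C + B) → A ⊆ C) ∧
      (A + B ⊆ C + B → A ⊆ C) ∧
      (closure (A + B) ⊆ closure (C + B) → A ⊆ C) :=
  stmt_12_general A B C hBne hBbdd hCcl hCconv
end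

section
/- Let X be a topological space, Y a real normed vector space, and let F₁, F₂ : X → 2^Y be multifunctions. Suppose F₁ and F₂ are boundedly H-lsc at x₀ ∈ X, that each F_i is locally convex-valued and locally closed-valued at x₀ (i.e., there is a neighbourhood of x₀ on which all values of F_i are convex and on which all values of F_i are closed), and that int(F₁(x₀) ∩ F₂(x₀)) ≠ ∅. Then the intersection multifunction F = F₁ ∩ F₂, defined by F(x) = F₁(x) ∩ F₂(x), is boundedly H-lsc at x₀. -/
/-
Fix `a` and `ρ > 0` with `B(a, ρ) ⊆ F₁ x₀ ∩ F₂ x₀`. Near `x₀`, the values `F_i x` are closed and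
convex and `B(a, ρ) ⊆ F_i x + B(δ)`; by Hahn–Banach separation this forces
`B(a, ρ - 2δ) ⊆ F_i x`, a ball common to both values. Given `y ∈ F₁ x₀ ∩ F₂ x₀ ∩ B(r)`, the point
`w = (1 - t) y + t a` with `t` small lies in both `F_i x`: it is a convex combination of a point of
`F_i x` within `δ` of `y` and a point of the common ball, once `δ ≪ t ρ`. Finally
`‖y - w‖ = t ‖y - a‖ < t (r + ‖a‖)`, which is small.
-/

open Set Pointwise Metric Filter Topology

/-- A multifunction `F : X → 2^Y` into a normed space is boundedly H-lsc at `x₀`: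
for every `ε > 0` and every `r > 0` there is a neighbourhood `U` of `x₀` such that
`F x₀ ∩ B(r) ⊆ F x + B(ε)` for every `x ∈ U`. -/
def BoundedlyHLsc {X Y : Type*} [TopologicalSpace X] [NormedAddCommGroup Y]
    [NormedSpace ℝ Y] (F : X → Set Y) (x₀ : X) : Prop :=
  ∀ ε > (0 : ℝ), ∀ r > (0 : ℝ), ∃ U ∈ 𝓝 x₀, ∀ x ∈ U,
    F x₀ ∩ ball (0 : Y) r ⊆ F x + ball (0 : Y) ε

section Convex

variable {Y : Type*} [NormedAddCommGroup Y] [NormedSpace ℝ Y] {C : Set Y} {a y : Y} {ρ δ t : ℝ}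

theorem Convex.ball_subset_of_ball_subset_add_ball (hC : Convex ℝ C) (hCcl : IsClosed C)
    (hδ : 0 ≤ δ) (h : ball a ρ ⊆ C + ball 0 δ) : ball a (ρ - 2 * δ) ⊆ C := by
  intro z hz
  rw [mem_ball] at hz
  by_contra hzC
  obtain ⟨f, u, hfC, hfz⟩ := geometric_hahn_banach_closed_point hC hCcl hzC
  have hbound : ∀ w ∈ ball a ρ, f w < u + ‖f‖ * δ := by
    intro w hw
    have hw := h hw
    rw [add_ball_zero, mem_thickening_iff] at hw
    obtain ⟨c, hc, hwc⟩ := hw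
    calc f w = f c + f (w - c) := by simp
      _ < u + ‖f‖ * δ := by
        refine add_lt_add_of_lt_of_le (hfC c hc) ?_
        calc f (w - c) ≤ ‖f (w - c)‖ := Real.le_norm_self _
          _ ≤ ‖f‖ * ‖w - c‖ := f.le_opNorm _
          _ ≤ ‖f‖ * δ := by
            rw [← dist_eq_norm]
            exact mul_le_mul_of_nonneg_left hwc.le (norm_nonneg f)
  have hf : 0 < ‖f‖ := by
    have := hbound z (mem_ball.2 (by linarith))
    by_contra! hf
    nlinarith [norm_nonneg f]
  obtain ⟨v, hv, hfv⟩ : ∃ v : Y, ‖v‖ < 1 ∧ ‖f‖ / 2 < f v := by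
    obtain ⟨v, hv, hfv⟩ := f.exists_lt_apply_of_lt_opNorm (half_lt_self hf)
    rcases le_total 0 (f v) with hfv₀ | hfv₀
    · exact ⟨v, hv, by rwa [Real.norm_of_nonneg hfv₀] at hfv⟩
    · exact ⟨-v, by rwa [norm_neg], by rwa [Real.norm_of_nonpos hfv₀, ← map_neg] at hfv⟩
  -- `z + 2δ v` still lies in `ball a ρ`, but `f` exceeds `u + ‖f‖ δ` there
  have hw : z + (2 * δ) • v ∈ ball a ρ := by
    rw [mem_ball, dist_eq_norm, add_sub_right_comm]
    calc ‖z - a + (2 * δ) • v‖ ≤ ‖z - a‖ + 2 * δ * ‖v‖ := by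
          grw [norm_add_le, norm_smul, Real.norm_of_nonneg (by positivity)]
      _ < ρ := by rw [← dist_eq_norm]; nlinarith
  have := hbound _ hw
  rw [map_add, map_smul, smul_eq_mul] at this
  nlinarith

theorem Convex.combo_mem_of_mem_add_ball (hC : Convex ℝ C) (hball : ball a ρ ⊆ C)
    (ht₀ : 0 < t) (ht₁ : t ≤ 1) (hy : y ∈ C + ball 0 (t * ρ)) : (1 - t) • y + t • a ∈ C := by
  obtain ⟨c, hc, b, hb, rfl⟩ := hy
  rw [mem_ball_zero_iff] at hb
  have hab : a + (t⁻¹ * (1 - t)) • b ∈ C := by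
    refine hball (mem_ball_iff_norm.2 ?_)
    have ht₀' : 0 ≤ t⁻¹ := inv_nonneg.2 ht₀.le
    rw [add_sub_cancel_left, norm_smul, Real.norm_of_nonneg (mul_nonneg ht₀' (by linarith))]
    calc t⁻¹ * (1 - t) * ‖b‖ ≤ t⁻¹ * ‖b‖ :=
          mul_le_mul_of_nonneg_right (mul_le_of_le_one_right ht₀' (by linarith)) (norm_nonneg b)
      _ < t⁻¹ * (t * ρ) := by gcongr
      _ = ρ := by field_simp
  convert hC hc hab (sub_nonneg.2 ht₁) ht₀.le (by ring) using 1
  match_scalars <;> field_simp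

end Convex

section BoundedlyHLsc

variable {X Y : Type*} [TopologicalSpace X] [NormedAddCommGroup Y] [NormedSpace ℝ Y]
  {F : X → Set Y} {x₀ : X} {a : Y} {ρ δ : ℝ}

theorem BoundedlyHLsc.eventually_inter_ball_subset (h : BoundedlyHLsc F x₀) {ε r : ℝ}
    (hε : 0 < ε) (hr : 0 < r) : ∀ᶠ x in 𝓝 x₀, F x₀ ∩ ball 0 r ⊆ F x + ball 0 ε :=
  eventually_iff_exists_mem.2 (h ε hε r hr)

theorem BoundedlyHLsc.eventually_ball_subset (h : BoundedlyHLsc F x₀)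
    (hconv : ∀ᶠ x in 𝓝 x₀, Convex ℝ (F x)) (hcl : ∀ᶠ x in 𝓝 x₀, IsClosed (F x))
    (hρ : 0 < ρ) (hball : ball a ρ ⊆ F x₀) (hδ : 0 < δ) :
    ∀ᶠ x in 𝓝 x₀, ball a (ρ - 2 * δ) ⊆ F x := by
  have hball' : ball a ρ ⊆ ball 0 (‖a‖ + ρ) := ball_subset_ball' (by simp [add_comm])
  filter_upwards [h.eventually_inter_ball_subset hδ (by positivity : 0 < ‖a‖ + ρ), hconv, hcl]
    with x hx hconvx hclx
  exact hconvx.ball_subset_of_ball_subset_add_ball hclx hδ.le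
    fun w hw => hx ⟨hball hw, hball' hw⟩

theorem BoundedlyHLsc.eventually_combo_mem (h : BoundedlyHLsc F x₀)
    (hconv : ∀ᶠ x in 𝓝 x₀, Convex ℝ (F x)) (hcl : ∀ᶠ x in 𝓝 x₀, IsClosed (F x))
    (hρ : 0 < ρ) (hball : ball a ρ ⊆ F x₀) {t r : ℝ} (ht₀ : 0 < t) (ht₁ : t ≤ 1) (hr : 0 < r) :
    ∀ᶠ x in 𝓝 x₀, ∀ y ∈ F x₀ ∩ ball 0 r, (1 - t) • y + t • a ∈ F x := by
  set δ := t * ρ / 4 with hδ_def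
  have hδ : 0 < δ := by positivity
  have hshrink : ball a (ρ / 2) ⊆ ball a (ρ - 2 * δ) := ball_subset_ball (by nlinarith)
  have hthick : ball (0 : Y) δ ⊆ ball 0 (t * (ρ / 2)) :=
    ball_subset_ball (by rw [hδ_def]; linarith)
  filter_upwards [h.eventually_inter_ball_subset hδ hr, h.eventually_ball_subset hconv hcl hρ
    hball hδ, hconv] with x hy hB hC y hy'
  exact hC.combo_mem_of_mem_add_ball (hshrink.trans hB) ht₀ ht₁ (add_subset_add_left hthick (hy hy'))

end BoundedlyHLsc

/-- If `F₁, F₂` are boundedly H-lsc at `x₀`, locally convex- and locally closed-valued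
at `x₀`, and `int (F₁ x₀ ∩ F₂ x₀) ≠ ∅`, then `F₁ ∩ F₂` is boundedly H-lsc at `x₀`. -/
theorem stmt_13 {X Y : Type*} [TopologicalSpace X] [NormedAddCommGroup Y]
    [NormedSpace ℝ Y] (F₁ F₂ : X → Set Y) (x₀ : X)
    (h₁ : BoundedlyHLsc F₁ x₀) (h₂ : BoundedlyHLsc F₂ x₀)
    (hconv₁ : ∃ U ∈ 𝓝 x₀, ∀ x ∈ U, Convex ℝ (F₁ x))
    (hconv₂ : ∃ U ∈ 𝓝 x₀, ∀ x ∈ U, Convex ℝ (F₂ x))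
    (hcl₁ : ∃ U ∈ 𝓝 x₀, ∀ x ∈ U, IsClosed (F₁ x))
    (hcl₂ : ∃ U ∈ 𝓝 x₀, ∀ x ∈ U, IsClosed (F₂ x))
    (hint : (interior (F₁ x₀ ∩ F₂ x₀)).Nonempty) :
    BoundedlyHLsc (fun x => F₁ x ∩ F₂ x) x₀ := by
  rw [← eventually_iff_exists_mem] at hconv₁ hconv₂ hcl₁ hcl₂
  obtain ⟨a, ha⟩ := hint
  obtain ⟨ρ, hρ, hball⟩ := isOpen_iff.1 isOpen_interior a ha
  replace hball := hball.trans interior_subset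
  intro ε hε r hr
  refine eventually_iff_exists_mem.1 ?_
  obtain ⟨c, hc, hcε⟩ := exists_pos_mul_lt hε (r + ‖a‖)
  set t := min c 1
  have ht₀ : 0 < t := lt_min hc one_pos
  have htε : t * (r + ‖a‖) < ε := by nlinarith [min_le_left c 1, norm_nonneg a]
  filter_upwards [h₁.eventually_combo_mem hconv₁ hcl₁ hρ (hball.trans inter_subset_left) ht₀
    (min_le_right c 1) hr, h₂.eventually_combo_mem hconv₂ hcl₂ hρ (hball.trans inter_subset_right)
    ht₀ (min_le_right c 1) hr] with x hx₁ hx₂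
  rintro y ⟨⟨hy₁, hy₂⟩, hyr⟩
  refine ⟨_, ⟨hx₁ y ⟨hy₁, hyr⟩, hx₂ y ⟨hy₂, hyr⟩⟩, t • (y - a), ?_, by module⟩
  rw [mem_ball_zero_iff, norm_smul, Real.norm_of_nonneg ht₀.le]
  calc t * ‖y - a‖ ≤ t * (r + ‖a‖) := by
        gcongr
        exact (norm_sub_le y a).trans (by linarith [mem_ball_zero_iff.1 hyr])
    _ < ε := htε
end

section
/- Let X be a topological space, Y a real topological vector space, and 𝓑 a translation invariant cover of Y (i.e., B + c ∈ 𝓑 for every B ∈ 𝓑 and every c ∈ Y, where B + c = {b + c : b ∈ B}). Let F : X → 2^Y be a multifunction which is 𝓑-lsc at x₀ ∈ X and g : X → Y a function continuous at x₀. Then the multifunction F + g, defined by (F+g)(x) = F(x) + g(x) = {a + g(x) : a ∈ F(x)}, is 𝓑-lsc at x₀. -/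
/-!
Given `V`, choose `W` with `W + W ⊆ V`. Lower semicontinuity of `F`, applied to the translate
`B - g x₀ ∈ 𝓑`, approximates `F x₀ ∩ (B - g x₀)` by `F x + W`; shifting back by `g x₀` instead of
`g x` leaves the error `g x₀ - g x`, which lies in the second `W` for `x` near `x₀`.
-/

open Set Pointwise Filter Topology

def CoverLowerSemicontinuousAt {X Y : Type*} [TopologicalSpace X] [TopologicalSpace Y]
    [AddZeroClass Y] (𝓑 : Set (Set Y)) (F : X → Set Y) (x₀ : X) : Prop :=
  ∀ V ∈ 𝓝 (0 : Y), ∀ B ∈ 𝓑, ∃ U ∈ 𝓝 x₀, ∀ x ∈ U, F x₀ ∩ B ⊆ F x + V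

theorem image_add_right_inter_subset {Y : Type*} [AddCommGroup Y] {A A' B W W' : Set Y} {c d : Y}
    (h : A ∩ (· + -c) '' B ⊆ A' + W) (hcd : c - d ∈ W') :
    (· + c) '' A ∩ B ⊆ (· + d) '' A' + (W + W') := by
  rintro _ ⟨⟨a, haA, rfl⟩, haB⟩
  obtain ⟨f, hf, w, hw, rfl⟩ := h ⟨haA, a + c, haB, add_neg_cancel_right a c⟩
  refine ⟨f + d, ⟨f, hf, rfl⟩, w + (c - d), add_mem_add hw hcd, ?_⟩
  show f + d + (w + (c - d)) = f + w + c
  abel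

theorem CoverLowerSemicontinuousAt.add_continuousAt {X Y : Type*} [TopologicalSpace X]
    [AddCommGroup Y] [TopologicalSpace Y] [IsTopologicalAddGroup Y]
    {𝓑 : Set (Set Y)} (htrans : ∀ B ∈ 𝓑, ∀ c : Y, (· + c) '' B ∈ 𝓑)
    {F : X → Set Y} {g : X → Y} {x₀ : X} (hF : CoverLowerSemicontinuousAt 𝓑 F x₀)
    (hg : ContinuousAt g x₀) :
    CoverLowerSemicontinuousAt 𝓑 (fun x => (· + g x) '' F x) x₀ := by
  intro V hV B hB
  obtain ⟨W, hW, hWW⟩ := exists_nhds_zero_half hV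
  obtain ⟨U, hU, hFU⟩ := hF W hW _ (htrans B hB (-g x₀))
  have hg_near : ∀ᶠ x in 𝓝 x₀, g x₀ - g x ∈ W := by
    have := (tendsto_const_nhds (x := g x₀)).sub hg.tendsto
    rw [sub_self] at this
    exact this hW
  refine ⟨U ∩ {x | g x₀ - g x ∈ W}, inter_mem hU hg_near, fun x ⟨hxU, hxg⟩ => ?_⟩
  exact (image_add_right_inter_subset (hFU x hxU) hxg).trans
    (add_subset_add_left (add_subset_iff.2 hWW))

theorem stmt_15_general {X Y : Type*} [TopologicalSpace X]
    [AddCommGroup Y] [TopologicalSpace Y]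
    [IsTopologicalAddGroup Y]
    (𝓑 : Set (Set Y))
    (htrans : ∀ B ∈ 𝓑, ∀ c : Y, (fun b => b + c) '' B ∈ 𝓑)
    (F : X → Set Y) (g : X → Y) (x₀ : X)
    (hF : ∀ V ∈ 𝓝 (0 : Y), ∀ B ∈ 𝓑, ∃ U ∈ 𝓝 x₀, ∀ x ∈ U, F x₀ ∩ B ⊆ F x + V)
    (hg : ContinuousAt g x₀) :
    ∀ V ∈ 𝓝 (0 : Y), ∀ B ∈ 𝓑, ∃ U ∈ 𝓝 x₀, ∀ x ∈ U,
      (fun a => a + g x₀) '' F x₀ ∩ B ⊆ ((fun a => a + g x) '' F x) + V :=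
  CoverLowerSemicontinuousAt.add_continuousAt htrans hF hg

/-- If `𝓑` is a translation invariant cover of a real topological vector space `Y`,
`F` is `𝓑`-lsc at `x₀` and `g` is continuous at `x₀`, then `F + g` is `𝓑`-lsc at `x₀`. -/
theorem stmt_15 {X Y : Type*} [TopologicalSpace X]
    [AddCommGroup Y] [Module ℝ Y] [TopologicalSpace Y]
    [IsTopologicalAddGroup Y] [ContinuousSMul ℝ Y]
    (𝓑 : Set (Set Y)) (hBne : ∀ B ∈ 𝓑, B.Nonempty) (hBcover : ⋃₀ 𝓑 = univ)
    (htrans : ∀ B ∈ 𝓑, ∀ c : Y, (fun b => b + c) '' B ∈ 𝓑)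
    (F : X → Set Y) (g : X → Y) (x₀ : X)
    (hF : ∀ V ∈ 𝓝 (0 : Y), ∀ B ∈ 𝓑, ∃ U ∈ 𝓝 x₀, ∀ x ∈ U, F x₀ ∩ B ⊆ F x + V)
    (hg : ContinuousAt g x₀) :
    ∀ V ∈ 𝓝 (0 : Y), ∀ B ∈ 𝓑, ∃ U ∈ 𝓝 x₀, ∀ x ∈ U,
      (fun a => a + g x₀) '' F x₀ ∩ B ⊆ ((fun a => a + g x) '' F x) + V :=
  stmt_15_general 𝓑 htrans F g x₀ hF hg
end
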